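/- arXiv:math/0511187 — 2 statements merged into one kernel-verified Lean document; each statement's English description precedes it below -/
import Mathlib

section
/- Let V, W be finite-dimensional real vector spaces, π : V → W a surjective linear map, and L ⊂ V ⊕ V* a maximal isotropic subspace with respect to the pairing ⟨X₁ ⊕ ξ₁, X₂ ⊕ ξ₂⟩₊ = (ξ₁(X₂) + ξ₂(X₁))/2. Then the pushforward π⋆L := {π(X) ⊕ μ : X ⊕ π*μ ∈ L, μ ∈ W*} is a maximal isotropic subspace of W ⊕ W*. -/
/-- The symmetric pairing `⟨X₁ ⊕ ξ₁, X₂ ⊕ ξ₂⟩₊ = (ξ₁(X₂) + ξ₂(X₁))/2` on `V ⊕ V*`. -/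
noncomputable def pairPlus {V : Type*} [AddCommGroup V] [Module ℝ V]
    (p q : V × Module.Dual ℝ V) : ℝ :=
  (p.2 q.1 + q.2 p.1) / 2

/-- Orthogonal complement of a subset of `V ⊕ V*` w.r.t. the pairing `⟨·,·⟩₊`. -/
def orthSet {V : Type*} [AddCommGroup V] [Module ℝ V]
    (S : Set (V × Module.Dual ℝ V)) : Set (V × Module.Dual ℝ V) :=
  {q | ∀ p ∈ S, pairPlus q p = 0}

/-- The pushforward `π⋆L = {π(X) ⊕ μ : X ⊕ π*μ ∈ L}` of a maximal isotropic `L ⊂ V ⊕ V*`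
along a surjective linear map `π : V → W` is maximal isotropic in `W ⊕ W*`. -/
theorem stmt5 {V W : Type*} [AddCommGroup V] [Module ℝ V] [FiniteDimensional ℝ V]
    [AddCommGroup W] [Module ℝ W] [FiniteDimensional ℝ W]
    (π : V →ₗ[ℝ] W) (hπ : Function.Surjective π)
    (L : Submodule ℝ (V × Module.Dual ℝ V))
    (hiso : ∀ p ∈ L, ∀ q ∈ L, pairPlus p q = 0)
    (hmax : orthSet (L : Set (V × Module.Dual ℝ V)) = (L : Set (V × Module.Dual ℝ V))) :
    (∀ p ∈ {p : W × Module.Dual ℝ W | ∃ X : V, (X, π.dualMap p.2) ∈ L ∧ π X = p.1},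
      ∀ q ∈ {p : W × Module.Dual ℝ W | ∃ X : V, (X, π.dualMap p.2) ∈ L ∧ π X = p.1},
        pairPlus p q = 0) ∧
    orthSet {p : W × Module.Dual ℝ W | ∃ X : V, (X, π.dualMap p.2) ∈ L ∧ π X = p.1}
      = {p : W × Module.Dual ℝ W | ∃ X : V, (X, π.dualMap p.2) ∈ L ∧ π X = p.1} := by
  -- membership in L is closed under the pairing being zero (orthSet = L)
  have hmem : ∀ z : V × Module.Dual ℝ V,
      (∀ p ∈ L, pairPlus z p = 0) → z ∈ L := by
    intro z hz
    have : z ∈ orthSet (L : Set (V × Module.Dual ℝ V)) := hz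
    rw [hmax] at this
    exact this
  -- Part 1: isotropy of the pushforward
  have hI : ∀ p ∈ {p : W × Module.Dual ℝ W | ∃ X : V, (X, π.dualMap p.2) ∈ L ∧ π X = p.1},
      ∀ q ∈ {p : W × Module.Dual ℝ W | ∃ X : V, (X, π.dualMap p.2) ∈ L ∧ π X = p.1},
        pairPlus p q = 0 := by
    rintro p ⟨X, hXL, hXp⟩ q ⟨Y, hYL, hYq⟩
    have h := hiso _ hXL _ hYL
    simp only [pairPlus, LinearMap.dualMap_apply] at h ⊢
    rw [← hXp, ← hYq]
    exact h
  refine ⟨hI, ?_⟩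
  apply Set.Subset.antisymm
  · -- hard direction
    rintro ⟨w, μ⟩ hq
    have hq' : ∀ p ∈ {p : W × Module.Dual ℝ W | ∃ X : V, (X, π.dualMap p.2) ∈ L ∧ π X = p.1},
        pairPlus (w, μ) p = 0 := hq
    classical
    -- the projection of L to V*
    set pr2L : Submodule ℝ (Module.Dual ℝ V) :=
      L.map (LinearMap.snd ℝ V (Module.Dual ℝ V)) with hpr2L
    -- the "vector part" of L
    set Msub : Submodule ℝ V := L.comap (LinearMap.inl ℝ V (Module.Dual ℝ V)) with hMsub
    have hMmem : ∀ Z : V, Z ∈ Msub ↔ (Z, (0 : Module.Dual ℝ V)) ∈ L := by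
      intro Z; rfl
    -- Claim 1: pr2L.dualCoannihilator = Msub
    have claim1 : pr2L.dualCoannihilator = Msub := by
      ext Z
      rw [Submodule.mem_dualCoannihilator, hMmem]
      constructor
      · intro h
        apply hmem
        rintro ⟨Y, η⟩ hYη
        have hη : η ∈ pr2L := ⟨(Y, η), hYη, rfl⟩
        have := h η hη
        simp [pairPlus, this]
      · intro h φ hφ
        obtain ⟨y, hyL, hy2⟩ := hφ
        have := hiso _ h _ hyL
        simp only [pairPlus] at this
        simp only [LinearMap.zero_apply] at this
        have hy2' : y.2 = φ := hy2
        rw [hy2'] at this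
        linarith
    -- Claim 2: Msub.dualAnnihilator = pr2L
    have claim2 : Msub.dualAnnihilator = pr2L := by
      rw [← claim1, Subspace.dualCoannihilator_dualAnnihilator_eq]
    -- Step A: construct X₁ with (X₁, π*μ) ∈ L
    obtain ⟨g, hgval⟩ : ∃ g : L →ₗ[ℝ] Module.Dual ℝ V,
        ∀ z : L, g z = (z : V × Module.Dual ℝ V).2 :=
      ⟨(LinearMap.snd ℝ V (Module.Dual ℝ V)).comp L.subtype, fun _ => rfl⟩
    obtain ⟨c, hcval⟩ : ∃ c : L →ₗ[ℝ] ℝ,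
        ∀ z : L, c z = -(μ (π (z : V × Module.Dual ℝ V).1)) :=
      ⟨-(μ.comp (π.comp ((LinearMap.fst ℝ V (Module.Dual ℝ V)).comp L.subtype))), fun _ => rfl⟩
    have hrange : LinearMap.range g = pr2L := by
      apply le_antisymm
      · rintro x ⟨z, rfl⟩
        rw [hgval]
        exact ⟨(z : V × Module.Dual ℝ V), z.2, rfl⟩
      · rintro x ⟨y, hyL, rfl⟩
        exact ⟨⟨y, hyL⟩, hgval _⟩
    have hker : LinearMap.ker g ≤ LinearMap.ker c := by
      intro z hz
      have hz2 : (z : V × Module.Dual ℝ V).2 = 0 := by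
        rw [← hgval z]; exact hz
      -- (z.1, 0) ∈ L, so (π z.1, 0) is in the pushforward
      have hmemP : ((π (z : V × Module.Dual ℝ V).1, (0 : Module.Dual ℝ W)) :
          W × Module.Dual ℝ W) ∈
          {p : W × Module.Dual ℝ W | ∃ X : V, (X, π.dualMap p.2) ∈ L ∧ π X = p.1} := by
        refine ⟨(z : V × Module.Dual ℝ V).1, ?_, rfl⟩
        have h5 : ((z : V × Module.Dual ℝ V).1, (z : V × Module.Dual ℝ V).2) ∈ L := by
          simpa using z.2
        rw [hz2] at h5
        simpa using h5
      have h0 := hq' _ hmemP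
      simp only [pairPlus, LinearMap.zero_apply] at h0
      have h6 : μ (π (z : V × Module.Dual ℝ V).1) = 0 := by linarith
      rw [LinearMap.mem_ker, hcval, h6, neg_zero]
    -- factor c through the range of g using a linear section of g.rangeRestrict
    have hsurj : Function.Surjective g.rangeRestrict := g.surjective_rangeRestrict
    haveI : Module.Free ℝ ↥(LinearMap.range g) :=
      Module.Free.of_divisionRing ℝ ↥(LinearMap.range g)
    haveI : Module.Projective ℝ ↥(LinearMap.range g) := Module.Projective.of_free
    obtain ⟨s, hs⟩ := g.rangeRestrict.exists_rightInverse_of_surjective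
      (LinearMap.range_eq_top.mpr hsurj)
    set f₀ : (LinearMap.range g) →ₗ[ℝ] ℝ := c.comp s with hf₀
    have hf₀val : ∀ (z : L) (hzr : g z ∈ LinearMap.range g), f₀ ⟨g z, hzr⟩ = c z := by
      intro z hzr
      have h1 : g.rangeRestrict (s ⟨g z, hzr⟩) = ⟨g z, hzr⟩ := by
        have h7 := congrArg (fun m => m (⟨g z, hzr⟩ : LinearMap.range g)) hs
        exact h7
      have h2 : g (s ⟨g z, hzr⟩) = g z := congrArg Subtype.val h1
      have h3 : s ⟨g z, hzr⟩ - z ∈ LinearMap.ker g := by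
        rw [LinearMap.mem_ker, map_sub g (s ⟨g z, hzr⟩) z, h2, sub_self]
      have h4 : c (s ⟨g z, hzr⟩ - z) = 0 := hker h3
      rw [map_sub c (s ⟨g z, hzr⟩) z, sub_eq_zero] at h4
      simpa [hf₀] using h4
    obtain ⟨f, hf⟩ := LinearMap.exists_extend f₀
    set X₁ : V := (Module.evalEquiv ℝ V).symm f with hX₁def
    have hX₁ : ∀ z ∈ L, (z : V × Module.Dual ℝ V).2 X₁ = -(μ (π z.1)) := by
      rintro z hzL
      have hmemr : z.2 ∈ LinearMap.range g := ⟨⟨z, hzL⟩, hgval _⟩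
      have h1 : z.2 X₁ = f z.2 := Module.apply_evalEquiv_symm_apply ℝ V z.2 f
      have h2 : f z.2 = f₀ ⟨z.2, hmemr⟩ := by
        have h8 := congrArg (fun m => m (⟨z.2, hmemr⟩ : LinearMap.range g)) hf
        simpa using h8
      have h3 : f₀ ⟨z.2, hmemr⟩ = c ⟨z, hzL⟩ := by
        have h9 := hf₀val ⟨z, hzL⟩ (LinearMap.mem_range_self g ⟨z, hzL⟩)
        have h10 : (⟨g ⟨z, hzL⟩, LinearMap.mem_range_self g ⟨z, hzL⟩⟩ :
            LinearMap.range g) = ⟨z.2, hmemr⟩ := Subtype.ext (hgval _)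
        rw [h10] at h9
        exact h9
      rw [h1, h2, h3, hcval]
    have hXL₁ : (X₁, π.dualMap μ) ∈ L := by
      apply hmem
      rintro ⟨Y, η⟩ hYη
      have := hX₁ (Y, η) hYη
      simp only [pairPlus, LinearMap.dualMap_apply]
      simp only at this
      rw [this]
      ring
    -- Step B: correct the vector part
    set u : W := w - π X₁ with hu_def
    set N : Submodule ℝ (Module.Dual ℝ W) := pr2L.comap π.dualMap with hN
    have hu : u ∈ N.dualCoannihilator := by
      rw [Submodule.mem_dualCoannihilator]
      intro ν hν
      obtain ⟨y, hyL, hy2⟩ := (Submodule.mem_comap.mp hν)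
      have hyL' : (y.1, π.dualMap ν) ∈ L := by
        have h10 : (y.1, y.2) ∈ L := by simpa using hyL
        have hy2' : y.2 = π.dualMap ν := hy2
        rwa [hy2'] at h10
      have hmemP : ((π y.1, ν) : W × Module.Dual ℝ W) ∈
          {p : W × Module.Dual ℝ W | ∃ X : V, (X, π.dualMap p.2) ∈ L ∧ π X = p.1} :=
        ⟨y.1, hyL', rfl⟩
      have h1 := hq' _ hmemP
      have h2 := hiso _ hXL₁ _ hyL'
      simp only [pairPlus, LinearMap.dualMap_apply] at h1 h2
      simp only [hu_def, map_sub]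
      linarith
    have hle : (Msub.map π).dualAnnihilator ≤ N := by
      intro ν hν
      rw [Submodule.mem_dualAnnihilator] at hν
      rw [Submodule.mem_comap, ← claim2, Submodule.mem_dualAnnihilator]
      intro Z hZ
      exact hν (π Z) ⟨Z, hZ, rfl⟩
    have hsub : N.dualCoannihilator ≤ Msub.map π := by
      calc N.dualCoannihilator ≤ (Msub.map π).dualAnnihilator.dualCoannihilator :=
            Submodule.dualCoannihilator_anti hle
        _ = Msub.map π := Subspace.dualAnnihilator_dualCoannihilator_eq
    obtain ⟨Z, hZM, hZu⟩ := hsub hu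
    refine ⟨X₁ + Z, ?_, ?_⟩
    · have hZL : ((Z, (0 : Module.Dual ℝ V)) : V × Module.Dual ℝ V) ∈ L := (hMmem Z).mp hZM
      have := L.add_mem hXL₁ hZL
      simpa using this
    · simp only [map_add, hZu, hu_def]
      abel
  · -- easy direction: the pushforward is contained in its orthogonal
    intro q hq p hp
    exact hI q hq p hp
end

section
/- Let V be a finite-dimensional real vector space, L ⊂ V ⊕ V* a maximal isotropic subspace for the pairing ⟨X₁ ⊕ ξ₁, X₂ ⊕ ξ₂⟩₊ = (ξ₁(X₂)+ξ₂(X₁))/2, and β : L → ℝ a linear functional. Then there exists an isotropic element A ⊕ α ∈ V ⊕ V* such that β = 2⟨A ⊕ α, ·⟩₊ restricted to L. (Isotropic means α(A) = 0.) -/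
/-- The linear map `q ↦ 2⟨q,·⟩₊` from `V ⊕ V*` to its dual. -/
noncomputable def psiMap (V : Type*) [AddCommGroup V] [Module ℝ V] :
    (V × Module.Dual ℝ V) →ₗ[ℝ] Module.Dual ℝ (V × Module.Dual ℝ V) where
  toFun q :=
    { toFun := fun p => p.2 q.1 + q.2 p.1
      map_add' := by intro x y; simp; ring
      map_smul' := by intro c x; simp; ring }
  map_add' := by intro x y; apply LinearMap.ext; intro p; simp; ring
  map_smul' := by intro c x; apply LinearMap.ext; intro p; simp; ring

theorem psiMap_surj (V : Type*) [AddCommGroup V] [Module ℝ V] [FiniteDimensional ℝ V] :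
    Function.Surjective (psiMap V) := by
  have hinj : Function.Injective (psiMap V) := by
    rw [injective_iff_map_eq_zero]
    intro q hq
    have h2 : q.2 = 0 := by
      ext X
      have := congrFun (congrArg DFunLike.coe hq) (X, 0)
      simpa [psiMap] using this
    have h1 : q.1 = 0 := by
      rw [← Module.forall_dual_apply_eq_zero_iff ℝ]
      intro ξ
      have := congrFun (congrArg DFunLike.coe hq) (0, ξ)
      simpa [psiMap, h2] using this
    exact Prod.ext h1 h2
  rw [← LinearMap.range_eq_top]
  apply Submodule.eq_top_of_finrank_eq
  rw [LinearMap.finrank_range_of_inj hinj, Subspace.dual_finrank_eq]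

/-- For any maximal isotropic `L ⊂ V ⊕ V*` and any linear functional `β : L → ℝ`, there is
an isotropic element `A ⊕ α ∈ V ⊕ V*` (i.e. `α(A) = 0`) with
`β = 2⟨A ⊕ α, ·⟩₊|_L`, i.e. `β(X ⊕ ξ) = ξ(A) + α(X)` for all `X ⊕ ξ ∈ L`. -/
theorem stmt18 {V : Type*} [AddCommGroup V] [Module ℝ V] [FiniteDimensional ℝ V]
    (L : Submodule ℝ (V × Module.Dual ℝ V))
    (hiso : ∀ p ∈ L, ∀ q ∈ L, pairPlus p q = 0)
    (hmax : orthSet (L : Set (V × Module.Dual ℝ V)) = (L : Set (V × Module.Dual ℝ V)))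
    (β : L →ₗ[ℝ] ℝ) :
    ∃ (A : V) (α : Module.Dual ℝ V), α A = 0 ∧
      ∀ p : L, β p = 2 * pairPlus (A, α) (p : V × Module.Dual ℝ V) := by
  obtain ⟨F, hF⟩ := LinearMap.exists_extend β
  obtain ⟨q, hq⟩ := psiMap_surj V F
  have hq' : ∀ p : L, β p = (p : V × Module.Dual ℝ V).2 q.1 + q.2 (p : V × Module.Dual ℝ V).1 := by
    intro p
    have h1 : β p = F p := by rw [← hF]; rfl
    rw [h1, ← hq]; rfl
  have key : ∀ p : L, 2 * pairPlus q (p : V × Module.Dual ℝ V) = β p := by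
    intro p; rw [hq' p]; simp only [pairPlus]; ring
  by_cases hβ : ∃ ℓ : L, β ℓ ≠ 0
  · obtain ⟨ℓ, hℓ⟩ := hβ
    set t : ℝ := -(q.2 q.1) / β ℓ with ht
    refine ⟨q.1 + t • (ℓ : V × Module.Dual ℝ V).1, q.2 + t • (ℓ : V × Module.Dual ℝ V).2, ?_, ?_⟩
    · have hll : (ℓ : V × Module.Dual ℝ V).2 (ℓ : V × Module.Dual ℝ V).1 = 0 := by
        have := hiso ℓ ℓ.2 ℓ ℓ.2
        simp [pairPlus] at this
        linarith
      have hbl : (ℓ : V × Module.Dual ℝ V).2 q.1 + q.2 (ℓ : V × Module.Dual ℝ V).1 = β ℓ :=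
        (hq' ℓ).symm
      simp only [LinearMap.add_apply, LinearMap.smul_apply, map_add, map_smul, smul_eq_mul]
      have h3 : t * β ℓ = -(q.2 q.1) := by rw [ht]; field_simp
      linear_combination h3 + t * hbl + t ^ 2 * hll
    · intro p
      have hlp : pairPlus (ℓ : V × Module.Dual ℝ V) (p : V × Module.Dual ℝ V) = 0 :=
        hiso ℓ ℓ.2 p p.2
      simp only [pairPlus] at hlp ⊢
      rw [hq' p]
      simp only [LinearMap.add_apply, LinearMap.smul_apply, map_add, map_smul, smul_eq_mul]
      linear_combination (-2 * t) * hlp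
  · push_neg at hβ
    have hqL : q ∈ L := by
      have hm : q ∈ orthSet (L : Set (V × Module.Dual ℝ V)) := by
        intro p hp
        have := key ⟨p, hp⟩
        rw [hβ] at this
        linarith
      rw [hmax] at hm
      exact hm
    have : pairPlus q q = 0 := hiso q hqL q hqL
    simp [pairPlus] at this
    exact ⟨q.1, q.2, by linarith, fun p => by rw [key p, hβ]⟩
end
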